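/- Let f ∈ L¹(0,1) with f(x) ≠ 0 for almost every x ∈ (0,1), and let a, b ∈ 𝒜 with associated solutions u_a and u_b. If u_a(x) = u_b(x) for all x ∈ [0,1], then a(x) = b(x) for almost every x ∈ (0,1). -/

import Mathlib

/-!
Since `u_a = u_b`, the flux identities give `b (C_a - F) = a (C_b - F)` a.e., so `C_a - F` and
`C_b - F` have the same sign a.e. Each constant `C_a` is a mean of the continuous function `F`
with the positive weight `1/a`, hence a value of `F` on `[0,1]`. If `C_b < C_a`, then `F` takes a
value strictly between them, hence does so on a nonempty open subset of `(0,1)`, where the signs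
disagree. So `C_a = C_b`, and then `a = b` wherever `F ≠ C_a`. This is almost everywhere: a level
set of `F` meets the set where `F' = f ≠ 0` only in isolated points, hence in a countable set.
-/

open MeasureTheory Set Filter

noncomputable section

/-- The admissible set `𝒜`: measurable coefficients with `lam ≤ a ≤ Lam` a.e. on `(0,1)`. -/
def MemAdm (lam Lam : ℝ) (a : ℝ → ℝ) : Prop :=
  Measurable a ∧ ∀ᵐ x ∂(volume.restrict (Ioo (0 : ℝ) 1)), lam ≤ a x ∧ a x ≤ Lam

/-- The primitive `F(x) = ∫₀ˣ f(t) dt`. -/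
def Fprim (f : ℝ → ℝ) (x : ℝ) : ℝ := ∫ t in (0 : ℝ)..x, f t

/-- The constant `C_a = (∫₀¹ 1/a)⁻¹ ∫₀¹ F/a`. -/
def Cconst (f a : ℝ → ℝ) : ℝ :=
  (∫ x in Ioo (0 : ℝ) 1, 1 / a x)⁻¹ * ∫ x in Ioo (0 : ℝ) 1, Fprim f x / a x

/-- `u` is the solution associated with the coefficient `a` and right-hand side `f`:
`u` is continuous on `[0,1]` with `u(0) = u(1) = 0`, differentiable a.e. on `(0,1)`, and
`a u' = C_a - F` a.e. on `(0,1)`. -/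
def IsSol (f a u : ℝ → ℝ) : Prop :=
  ContinuousOn u (Icc 0 1) ∧ u 0 = 0 ∧ u 1 = 0 ∧
  ∀ᵐ x ∂(volume.restrict (Ioo (0 : ℝ) 1)),
    DifferentiableAt ℝ u x ∧ a x * deriv u x = Cconst f a - Fprim f x

open Topology

section LevelSet

variable {E : Type*} [NormedAddCommGroup E] [NormedSpace ℝ E] {f f' : ℝ → E}

theorem countable_setOf_hasDerivAt_ne_zero_eq (c : E) :
    {x | HasDerivAt f (f' x) x ∧ f' x ≠ 0 ∧ f x = c}.Countable :=
  (HereditarilyLindelofSpace.isLindelof _).countable_of_isDiscrete <|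
    isDiscrete_iff_nhdsNE.2 fun _ hx ↦ inf_principal_eq_bot.2 <|
      (hx.1.eventually_ne hx.2.1).mono fun _ hz hzS ↦ hz hzS.2.2

theorem ae_ne_of_ae_hasDerivAt_ne_zero {μ : Measure ℝ} [NullSingletonClass μ]
    (h : ∀ᵐ x ∂μ, HasDerivAt f (f' x) x ∧ f' x ≠ 0) (c : E) : ∀ᵐ x ∂μ, f x ≠ c := by
  filter_upwards [h, measure_eq_zero_iff_ae_notMem.1
    ((countable_setOf_hasDerivAt_ne_zero_eq c).measure_zero μ)] with x hx hxS hfx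
  exact hxS ⟨hx.1, hx.2, hfx⟩

end LevelSet

theorem ContinuousOn.notMem_of_ae_restrict_Ioo_notMem {a b : ℝ} {F : ℝ → ℝ} {U : Set ℝ}
    (hF : ContinuousOn F (Icc a b)) (hab : a < b) (hU : IsOpen U)
    (h : ∀ᵐ x ∂(volume.restrict (Ioo a b)), F x ∉ U) :
    ∀ x ∈ Icc a b, F x ∉ U := by
  intro x₀ hx₀ hFx₀
  have : (𝓝[Ioo a b] x₀).NeBot := by
    rw [← mem_closure_iff_nhdsWithin_neBot, closure_Ioo hab.ne]
    exact hx₀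
  obtain ⟨x, hx, hFx⟩ := (eventually_mem_nhdsWithin.and
    (nhdsWithin_mono _ Ioo_subset_Icc_self (hF x₀ hx₀ (hU.mem_nhds hFx₀)))).exists
  have hV : IsOpen (Ioo a b ∩ F ⁻¹' U) :=
    (hF.mono Ioo_subset_Icc_self).isOpen_inter_preimage isOpen_Ioo hU
  refine (hV.measure_pos volume ⟨x, hx, hFx⟩).ne' (measure_eq_zero_iff_ae_notMem.2 ?_)
  filter_upwards [(ae_restrict_iff' measurableSet_Ioo).1 h] with y hy hyV
  exact hy hyV.1 hyV.2

theorem inv_integral_mul_integral_mul_mem_Icc {α : Type*} [MeasurableSpace α] {μ : Measure α}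
    [NeZero μ] {w F : α → ℝ} {m M : ℝ} (hw : Integrable w μ) (hw_pos : ∀ᵐ x ∂μ, 0 < w x)
    (hF_meas : AEStronglyMeasurable F μ) (hF : ∀ᵐ x ∂μ, F x ∈ Icc m M) :
    (∫ x, w x ∂μ)⁻¹ * ∫ x, F x * w x ∂μ ∈ Icc m M := by
  have hFw : Integrable (fun x ↦ F x * w x) μ :=
    hw.bdd_mul (c := max |m| |M|) hF_meas <| hF.mono fun x hx ↦ abs_le_max_abs_abs hx.1 hx.2
  have hw_int_pos : 0 < ∫ x, w x ∂μ := by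
    rw [integral_pos_iff_support_of_nonneg_ae (hw_pos.mono fun _ hx ↦ hx.le) hw]
    refine (Measure.measure_univ_pos.2 (NeZero.ne μ)).trans_le (measure_mono_ae ?_)
    exact hw_pos.mono fun x hx _ ↦ hx.ne'
  constructor
  · rw [le_inv_mul_iff₀ hw_int_pos, mul_comm, ← integral_const_mul]
    exact integral_mono_ae (hw.const_mul m) hFw <|
      (hF.and hw_pos).mono fun x hx ↦ by nlinarith [hx.1.1, hx.2]
  · rw [inv_mul_le_iff₀ hw_int_pos, mul_comm, ← integral_const_mul]
    exact integral_mono_ae hFw (hw.const_mul M) <|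
      (hF.and hw_pos).mono fun x hx ↦ by nlinarith [hx.1.2, hx.2]

theorem eq_of_ae_mul_sub_eq_mul_sub {F a b : ℝ → ℝ} {C₁ C₂ : ℝ} (hF : ContinuousOn F (Icc 0 1))
    (hC₁ : C₁ ∈ F '' Icc 0 1) (hC₂ : C₂ ∈ F '' Icc 0 1)
    (ha : ∀ᵐ x ∂(volume.restrict (Ioo (0 : ℝ) 1)), 0 < a x)
    (hb : ∀ᵐ x ∂(volume.restrict (Ioo (0 : ℝ) 1)), 0 < b x)
    (h : ∀ᵐ x ∂(volume.restrict (Ioo (0 : ℝ) 1)), b x * (C₁ - F x) = a x * (C₂ - F x)) :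
    C₁ = C₂ := by
  wlog hlt : C₂ < C₁ generalizing a b C₁ C₂
  · rcases (not_lt.1 hlt).lt_or_eq with hlt | rfl
    · exact (this hC₂ hC₁ hb ha (h.mono fun _ hx ↦ hx.symm) hlt).symm
    · rfl
  have hsign : ∀ᵐ x ∂(volume.restrict (Ioo (0 : ℝ) 1)), F x ∉ Ioo C₂ C₁ := by
    filter_upwards [ha, hb, h] with x hax hbx hx ⟨h₂, h₁⟩
    nlinarith [mul_pos hbx (sub_pos.2 h₁), mul_pos hax (sub_pos.2 h₂)]
  obtain ⟨m, hm⟩ := exists_between hlt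
  obtain ⟨x₀, hx₀, rfl⟩ :=
    (isPreconnected_Icc.image F hF).Icc_subset hC₂ hC₁ (Ioo_subset_Icc_self hm)
  exact (hF.notMem_of_ae_restrict_Ioo_notMem zero_lt_one isOpen_Ioo hsign x₀ hx₀ hm).elim

theorem continuousOn_Fprim {f : ℝ → ℝ} (hf : IntegrableOn f (Ioo (0 : ℝ) 1)) :
    ContinuousOn (Fprim f) (Icc 0 1) := by
  have h01 : uIcc (0 : ℝ) 1 = Icc 0 1 := uIcc_of_le zero_le_one
  have hf' : IntegrableOn f (uIcc 0 1) := by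
    rwa [h01, integrableOn_Icc_iff_integrableOn_Ioo]
  exact h01 ▸ intervalIntegral.continuousOn_primitive_interval hf'

theorem ae_hasDerivAt_Fprim {f : ℝ → ℝ} (hf : IntegrableOn f (Ioo (0 : ℝ) 1)) :
    ∀ᵐ x ∂(volume.restrict (Ioo (0 : ℝ) 1)), HasDerivAt (Fprim f) (f x) x := by
  have h01 : uIcc (0 : ℝ) 1 = Icc 0 1 := uIcc_of_le zero_le_one
  have hf' : IntervalIntegrable f volume 0 1 :=
    (intervalIntegrable_iff_integrableOn_Ioo_of_le zero_le_one).2 hf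
  filter_upwards [ae_restrict_of_ae hf'.ae_hasDerivAt_integral,
    ae_restrict_mem measurableSet_Ioo] with x hx hxI
  exact hx (h01 ▸ Ioo_subset_Icc_self hxI) 0 (h01 ▸ left_mem_Icc.2 zero_le_one)

theorem MemAdm.ae_pos {lam Lam : ℝ} {a : ℝ → ℝ} (ha : MemAdm lam Lam a) (hlam : 0 < lam) :
    ∀ᵐ x ∂(volume.restrict (Ioo (0 : ℝ) 1)), 0 < a x :=
  ha.2.mono fun _ hx ↦ hlam.trans_le hx.1

theorem Cconst_mem_image {lam Lam : ℝ} {f a : ℝ → ℝ} (hlam : 0 < lam) (ha : MemAdm lam Lam a)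
    (hf : IntegrableOn f (Ioo (0 : ℝ) 1)) : Cconst f a ∈ Fprim f '' Icc 0 1 := by
  have hF := continuousOn_Fprim hf
  have : NeZero (volume.restrict (Ioo (0 : ℝ) 1)) := ⟨by simp⟩
  have hw : IntegrableOn (fun x ↦ 1 / a x) (Ioo 0 1) := by
    refine Integrable.mono' (integrable_const (1 / lam))
      (measurable_const.div ha.1).aestronglyMeasurable ?_
    filter_upwards [ha.2] with x hx
    rw [Real.norm_of_nonneg (one_div_pos.2 (hlam.trans_le hx.1)).le]
    exact one_div_le_one_div_of_le hlam hx.1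
  have hC : Cconst f a =
      (∫ x in Ioo (0 : ℝ) 1, 1 / a x)⁻¹ * ∫ x in Ioo (0 : ℝ) 1, Fprim f x * (1 / a x) := by
    simp only [Cconst, mul_one_div]
  rw [hC, hF.image_Icc zero_le_one]
  refine inv_integral_mul_integral_mul_mem_Icc hw
    ((ha.ae_pos hlam).mono fun _ hx ↦ one_div_pos.2 hx)
    ((hF.mono Ioo_subset_Icc_self).aestronglyMeasurable measurableSet_Ioo)
    (ae_restrict_of_forall_mem measurableSet_Ioo fun x hx ↦ ?_)
  rw [← hF.image_Icc zero_le_one]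
  exact mem_image_of_mem _ (Ioo_subset_Icc_self hx)

theorem IsSol.ae_mul_Cconst_sub_eq_of_eqOn {f a b ua ub : ℝ → ℝ} (hua : IsSol f a ua)
    (hub : IsSol f b ub) (heq : EqOn ua ub (Icc 0 1)) :
    ∀ᵐ x ∂(volume.restrict (Ioo (0 : ℝ) 1)),
      b x * (Cconst f a - Fprim f x) = a x * (Cconst f b - Fprim f x) := by
  filter_upwards [hua.2.2.2, hub.2.2.2, ae_restrict_mem measurableSet_Ioo]
    with x ⟨_, hax⟩ ⟨_, hbx⟩ hx
  have hderiv : deriv ua x = deriv ub x := Filter.EventuallyEq.deriv_eq <|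
    eventually_of_mem (isOpen_Ioo.mem_nhds hx) fun y hy ↦ heq (Ioo_subset_Icc_self hy)
  rw [← hax, ← hbx, hderiv]
  ring

theorem one_dimensional_identifiability_general (lam Lam : ℝ) (hlam : 0 < lam)
    (f : ℝ → ℝ) (hf : IntegrableOn f (Ioo (0 : ℝ) 1))
    (hfne : ∀ᵐ x ∂(volume.restrict (Ioo (0 : ℝ) 1)), f x ≠ 0)
    (a b : ℝ → ℝ) (ha : MemAdm lam Lam a) (hb : MemAdm lam Lam b)
    (ua ub : ℝ → ℝ) (hua : IsSol f a ua) (hub : IsSol f b ub)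
    (heq : ∀ x ∈ Icc (0 : ℝ) 1, ua x = ub x) :
    ∀ᵐ x ∂(volume.restrict (Ioo (0 : ℝ) 1)), a x = b x := by
  have hcross := hua.ae_mul_Cconst_sub_eq_of_eqOn hub heq
  have hC : Cconst f a = Cconst f b :=
    eq_of_ae_mul_sub_eq_mul_sub (continuousOn_Fprim hf) (Cconst_mem_image hlam ha hf)
      (Cconst_mem_image hlam hb hf) (ha.ae_pos hlam) (hb.ae_pos hlam) hcross
  have hF_ne : ∀ᵐ x ∂(volume.restrict (Ioo (0 : ℝ) 1)), Fprim f x ≠ Cconst f a :=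
    ae_ne_of_ae_hasDerivAt_ne_zero ((ae_hasDerivAt_Fprim hf).and hfne) _
  filter_upwards [hcross, hF_ne] with x hx hne
  rw [← hC] at hx
  exact (mul_right_cancel₀ (sub_ne_zero.2 hne.symm) hx).symm

/-- One-dimensional identifiability: if `f ≠ 0` a.e. and `u_a = u_b` on `[0,1]`,
then `a = b` a.e. on `(0,1)`. -/
theorem one_dimensional_identifiability (lam Lam : ℝ) (hlam : 0 < lam) (hlamLam : lam ≤ Lam)
    (f : ℝ → ℝ) (hf : IntegrableOn f (Ioo (0 : ℝ) 1))
    (hfne : ∀ᵐ x ∂(volume.restrict (Ioo (0 : ℝ) 1)), f x ≠ 0)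
    (a b : ℝ → ℝ) (ha : MemAdm lam Lam a) (hb : MemAdm lam Lam b)
    (ua ub : ℝ → ℝ) (hua : IsSol f a ua) (hub : IsSol f b ub)
    (heq : ∀ x ∈ Icc (0 : ℝ) 1, ua x = ub x) :
    ∀ᵐ x ∂(volume.restrict (Ioo (0 : ℝ) 1)), a x = b x :=
  one_dimensional_identifiability_general lam Lam hlam f hf hfne a b ha hb ua ub hua hub heq
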